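/- Let α > 0, θ > 2, and p ≥ 1 with p > 2/(1+2α). Every coefficient array β satisfying the Besov condition B^α_{p,∞} satisfies the condition A^α_θ. -/

import Mathlib

open scoped BigOperators

/-- A coefficient array `β` is square-summable if `Σ_{j,k} β_{j,k}² < ∞`. -/
def SqSummable (β : ℕ → ℕ → ℝ) : Prop :=
  Summable fun j : ℕ => ∑ k ∈ Finset.range (2 ^ j), (β j k) ^ 2

/-- The Besov condition `B^α_{p,∞}`. -/
def CondBesov (β : ℕ → ℕ → ℝ) (α p : ℝ) : Prop :=
  ∃ C : ℝ, ∀ j : ℕ,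
    (2 : ℝ) ^ ((j : ℝ) * p * (α + 1 / 2 - 1 / p)) *
      ∑ k ∈ Finset.range (2 ^ j), |β j k| ^ p ≤ C

/-- `N(J,j) = min(⌊2^J (j−J+1)^{−θ}⌋, 2^j)`. -/
noncomputable def NJj (θ : ℝ) (J j : ℕ) : ℕ :=
  min ⌊(2 : ℝ) ^ J * ((j : ℝ) - (J : ℝ) + 1) ^ (-θ)⌋₊ (2 ^ j)

/-- `t_{j,J}(β)`: the minimum over subsets `A` of `{0,…,2^j−1}` of cardinality `N(J,j)`
of `Σ_{k ∉ A} β_{j,k}²`, i.e. the sum of squares of all but the `N(J,j)` largest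
`|β_{j,k}|` at level `j`. -/
noncomputable def tTail (β : ℕ → ℕ → ℝ) (θ : ℝ) (J j : ℕ) : ℝ :=
  sInf {x : ℝ | ∃ A : Finset ℕ, A ⊆ Finset.range (2 ^ j) ∧ A.card = NJj θ J j ∧
    x = ∑ k ∈ Finset.range (2 ^ j) \ A, (β j k) ^ 2}

/-- The condition `A^α_θ`. -/
def CondA (β : ℕ → ℕ → ℝ) (α θ : ℝ) : Prop :=
  ∃ C : ℝ, ∀ J : ℕ,
    (2 : ℝ) ^ (2 * (J : ℝ) * α) *
      ∑' j : ℕ, (if J ≤ j then tTail β θ J j else 0) ≤ C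

/-!
Write `S_j = ∑_k |β_{j,k}|^p` and `σ = α + 1/2 - 1/p`, which is positive because
`p > 2/(1+2α)`; the Besov condition says `S_j^{1/p} ≲ 2^{-jσ}`.

For `p ≤ 2`, let `A` hold the `N` largest coefficients of level `j`. A remaining coefficient is
dominated by `N + 1` coefficients, so `|β_{j,k}|^p ≤ S_j/(N+1)`, and writing
`β² = |β|^{2-p} |β|^p` gives `∑_{k ∉ A} β_{j,k}² ≤ S_j^{2/p} (N+1)^{1-2/p}`. Since
`N(J,j) + 1 ≥ 2^J (j-J+1)^{-θ}`, this yields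
`2^{2Jα} t_{J+l,J} ≲ (l+1)^{θ(2/p-1)} 2^{-2lσ}`, which is summable in `l` uniformly in `J`.

For `p > 2`, Hölder's inequality on the `2^j` coefficients of a level gives
`B^α_{p,∞} ⊆ B^α_{2,∞}`, which reduces this case to `p = 2`.
-/
open Finset

theorem Finset.exists_subset_card_eq_forall_le {ι κ : Type*} [DecidableEq ι] [LinearOrder κ]
    (s : Finset ι) (f : ι → κ) {n : ℕ} (hn : n ≤ #s) :
    ∃ A ⊆ s, #A = n ∧ ∀ a ∈ A, ∀ b ∈ s \ A, f b ≤ f a := by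
  induction n with
  | zero => exact ⟨∅, empty_subset s, rfl, by simp⟩
  | succ n ih =>
    obtain ⟨A, hAs, hcard, htop⟩ := ih (by omega)
    have hne : (s \ A).Nonempty := by
      rw [← card_pos, card_sdiff_of_subset hAs]
      omega
    obtain ⟨c, hc, hcmax⟩ := exists_max_image (s \ A) f hne
    rw [mem_sdiff] at hc
    refine ⟨insert c A, insert_subset hc.1 hAs, by rw [card_insert_of_notMem hc.2, hcard], ?_⟩
    intro a ha b hb
    have hb' : b ∈ s \ A := by
      simp only [mem_sdiff, mem_insert, not_or] at hb ⊢
      exact ⟨hb.1, hb.2.2⟩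
    rcases mem_insert.1 ha with rfl | ha
    · exact hcmax b hb'
    · exact htop a ha b hb'

lemma sq_le_rpow_mul_abs_rpow {y m p : ℝ} (hp : 0 < p) (hp2 : p ≤ 2) (hy : |y| ^ p ≤ m) :
    y ^ 2 ≤ m ^ ((2 - p) / p) * |y| ^ p :=
  calc y ^ 2 = |y| ^ ((2 - p) + p) := by rw [sub_add_cancel, Real.rpow_two, sq_abs]
    _ = (|y| ^ p) ^ ((2 - p) / p) * |y| ^ p := by
      rw [Real.rpow_add' (abs_nonneg y) (by norm_num), ← Real.rpow_mul (abs_nonneg y),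
        mul_div_cancel₀ _ hp.ne']
    _ ≤ m ^ ((2 - p) / p) * |y| ^ p := by gcongr

lemma sum_sdiff_sq_le {ι : Type*} [DecidableEq ι] {s A : Finset ι} {x : ι → ℝ} {p : ℝ}
    (hp : 0 < p) (hp2 : p ≤ 2) (hA : A ⊆ s) (htop : ∀ a ∈ A, ∀ b ∈ s \ A, |x b| ≤ |x a|) :
    ∑ b ∈ s \ A, x b ^ 2 ≤ (∑ k ∈ s, |x k| ^ p) ^ (2 / p) * ((#A : ℝ) + 1) ^ (1 - 2 / p) := by
  set S := ∑ k ∈ s, |x k| ^ p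
  have hS : 0 ≤ S := sum_nonneg fun k _ => by positivity
  have hn : (0 : ℝ) < #A + 1 := by positivity
  -- `b` together with the `#A` entries dominating it has `p`-mass at most `S`.
  have hsmall : ∀ b ∈ s \ A, |x b| ^ p ≤ S / (#A + 1) := by
    intro b hb
    rw [mem_sdiff] at hb
    rw [le_div_iff₀' hn]
    calc ((#A : ℝ) + 1) * |x b| ^ p = ∑ _k ∈ insert b A, |x b| ^ p := by
          rw [sum_const, card_insert_of_notMem hb.2, nsmul_eq_mul]; push_cast; ring
      _ ≤ ∑ k ∈ insert b A, |x k| ^ p := by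
          refine sum_le_sum fun k hk => ?_
          rcases mem_insert.1 hk with rfl | hk
          · exact le_rfl
          · exact Real.rpow_le_rpow (abs_nonneg _) (htop k hk b (mem_sdiff.2 hb)) hp.le
      _ ≤ S := sum_le_sum_of_subset_of_nonneg (insert_subset hb.1 hA) fun k _ _ => by positivity
  calc ∑ b ∈ s \ A, x b ^ 2
      ≤ ∑ b ∈ s \ A, (S / (#A + 1)) ^ ((2 - p) / p) * |x b| ^ p :=
        sum_le_sum fun b hb => sq_le_rpow_mul_abs_rpow hp hp2 (hsmall b hb)
    _ ≤ (S / (#A + 1)) ^ ((2 - p) / p) * S := by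
        rw [← mul_sum]
        gcongr
        exact sum_le_sum_of_subset_of_nonneg sdiff_subset fun k _ _ => by positivity
    _ = S ^ (2 / p) * ((#A : ℝ) + 1) ^ (1 - 2 / p) := by
        have h2p : (2 - p) / p + 1 = 2 / p := by field_simp; ring
        rw [Real.div_rpow hS hn.le, div_mul_eq_mul_div, ← Real.rpow_add_one' hS (by positivity),
          h2p, show 1 - 2 / p = -((2 - p) / p) by field_simp; ring, Real.rpow_neg hn.le,
          div_eq_mul_inv]

section Tail

variable {β : ℕ → ℕ → ℝ} {θ : ℝ} {J j : ℕ}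

noncomputable def levelNorm (β : ℕ → ℕ → ℝ) (p : ℝ) (j : ℕ) : ℝ :=
  (∑ k ∈ range (2 ^ j), |β j k| ^ p) ^ (1 / p)

lemma tTail_nonneg : 0 ≤ tTail β θ J j :=
  Real.sInf_nonneg <| by
    rintro x ⟨A, -, -, rfl⟩
    exact sum_nonneg fun k _ => sq_nonneg _

lemma tTail_le_sum_sdiff {A : Finset ℕ} (hA : A ⊆ range (2 ^ j)) (hcard : #A = NJj θ J j) :
    tTail β θ J j ≤ ∑ k ∈ range (2 ^ j) \ A, β j k ^ 2 := by
  refine csInf_le ⟨0, ?_⟩ ⟨A, hA, hcard, rfl⟩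
  rintro x ⟨A, -, -, rfl⟩
  exact sum_nonneg fun k _ => sq_nonneg _

lemma le_NJj_add_one (hθ : 0 ≤ θ) (hj : J ≤ j) :
    (2 : ℝ) ^ J * ((j : ℝ) - J + 1) ^ (-θ) ≤ NJj θ J j + 1 := by
  have hle : (2 : ℝ) ^ J * ((j : ℝ) - J + 1) ^ (-θ) ≤ 2 ^ j :=
    calc (2 : ℝ) ^ J * ((j : ℝ) - J + 1) ^ (-θ) ≤ 2 ^ J * 1 := by
          gcongr
          refine Real.rpow_le_one_of_one_le_of_nonpos ?_ (neg_nonpos.2 hθ)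
          linarith [(Nat.cast_le (α := ℝ)).2 hj]
      _ ≤ 2 ^ j := by rw [mul_one]; exact pow_le_pow_right₀ one_le_two hj
  rw [NJj, Nat.cast_min]
  rcases min_choice (⌊(2 : ℝ) ^ J * ((j : ℝ) - J + 1) ^ (-θ)⌋₊ : ℝ) ((2 ^ j : ℕ) : ℝ) with h | h
  · rw [h]; exact (Nat.lt_floor_add_one _).le
  · rw [h]; push_cast; linarith

lemma tTail_le_levelNorm_sq_mul {p : ℝ} (hp : 0 < p) (hp2 : p ≤ 2) (hθ : 0 ≤ θ) (hj : J ≤ j) :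
    tTail β θ J j ≤
      levelNorm β p j ^ 2 * ((2 : ℝ) ^ J * ((j : ℝ) - J + 1) ^ (-θ)) ^ (1 - 2 / p) := by
  obtain ⟨A, hA, hcard, htop⟩ := (range (2 ^ j)).exists_subset_card_eq_forall_le
    (fun k => |β j k|) (n := NJj θ J j) (by rw [card_range]; exact min_le_right _ _)
  have hx : 0 < (2 : ℝ) ^ J * ((j : ℝ) - J + 1) ^ (-θ) := by
    have : (J : ℝ) ≤ j := Nat.cast_le.2 hj
    have : 0 < (j : ℝ) - J + 1 := by linarith
    positivity
  have hsq : levelNorm β p j ^ 2 = (∑ k ∈ range (2 ^ j), |β j k| ^ p) ^ (2 / p) := by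
    rw [levelNorm, ← Real.rpow_natCast, ← Real.rpow_mul (sum_nonneg fun k _ => by positivity)]
    congr 1
    push_cast
    ring
  calc tTail β θ J j ≤ ∑ k ∈ range (2 ^ j) \ A, β j k ^ 2 := tTail_le_sum_sdiff hA hcard
    _ ≤ (∑ k ∈ range (2 ^ j), |β j k| ^ p) ^ (2 / p) * ((#A : ℝ) + 1) ^ (1 - 2 / p) :=
        sum_sdiff_sq_le hp hp2 hA htop
    _ ≤ _ := by
        rw [hsq, hcard]
        refine mul_le_mul_of_nonneg_left
          (Real.rpow_le_rpow_of_nonpos hx (le_NJj_add_one hθ hj) ?_) (by positivity)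
        rw [sub_nonpos, le_div_iff₀ hp]
        linarith

end Tail

lemma CondBesov.exists_levelNorm_le {β : ℕ → ℕ → ℝ} {α p : ℝ} (hp : 0 < p)
    (h : CondBesov β α p) :
    ∃ C, ∀ j : ℕ, levelNorm β p j ≤ C * 2 ^ (-(j * (α + 1 / 2 - 1 / p))) := by
  obtain ⟨C, hC⟩ := h
  set σ := α + 1 / 2 - 1 / p
  have hS : ∀ j, 0 ≤ ∑ k ∈ range (2 ^ j), |β j k| ^ p := fun j => sum_nonneg fun k _ => by
    positivity
  have hC0 : 0 ≤ C := (mul_nonneg (by positivity) (hS 0)).trans (hC 0)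
  refine ⟨C ^ (1 / p), fun j => ?_⟩
  calc levelNorm β p j ≤ (C * 2 ^ (-((j : ℝ) * p * σ))) ^ (1 / p) := by
        refine Real.rpow_le_rpow (hS j) ?_ (by positivity)
        rw [Real.rpow_neg zero_le_two, ← div_eq_mul_inv, le_div_iff₀' (by positivity)]
        exact hC j
    _ = C ^ (1 / p) * 2 ^ (-(j * σ)) := by
        rw [Real.mul_rpow hC0 (by positivity), ← Real.rpow_mul zero_le_two]
        congr 2
        field_simp

lemma levelNorm_two_le {β : ℕ → ℕ → ℝ} {p : ℝ} (hp : 2 ≤ p) (j : ℕ) :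
    levelNorm β 2 j ≤ 2 ^ ((j : ℝ) * (1 / 2 - 1 / p)) * levelNorm β p j := by
  set T := ∑ k ∈ range (2 ^ j), |β j k| ^ (2 : ℝ)
  have hT : 0 ≤ T := sum_nonneg fun k _ => by positivity
  have hHolder :
      T ^ (p / 2) ≤ ((2 : ℝ) ^ j) ^ (p / 2 - 1) * ∑ k ∈ range (2 ^ j), |β j k| ^ p := by
    have := Real.rpow_sum_le_const_mul_sum_rpow_of_nonneg (range (2 ^ j))
      (by linarith : 1 ≤ p / 2)
      (fun k _ => by positivity : ∀ k ∈ range (2 ^ j), 0 ≤ |β j k| ^ (2 : ℝ))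
    simp only [card_range, Nat.cast_pow, Nat.cast_ofNat, ← Real.rpow_mul (abs_nonneg _)] at this
    rwa [mul_div_cancel₀ _ two_ne_zero] at this
  calc levelNorm β 2 j = (T ^ (p / 2)) ^ (1 / p) := by
        rw [levelNorm, ← Real.rpow_mul hT]
        congr 1
        field_simp
    _ ≤ (((2 : ℝ) ^ j) ^ (p / 2 - 1) * ∑ k ∈ range (2 ^ j), |β j k| ^ p) ^ (1 / p) :=
        Real.rpow_le_rpow (by positivity) hHolder (by positivity)
    _ = 2 ^ ((j : ℝ) * (1 / 2 - 1 / p)) * levelNorm β p j := by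
        rw [Real.mul_rpow (by positivity) (sum_nonneg fun k _ => by positivity), levelNorm,
          ← Real.rpow_mul (by positivity), ← Real.rpow_natCast, ← Real.rpow_mul zero_le_two]
        congr 2
        field_simp

lemma summable_add_one_rpow_mul_geometric (q : ℝ) {r : ℝ} (hr0 : 0 < r) (hr1 : r < 1) :
    Summable fun l : ℕ => ((l : ℝ) + 1) ^ q * r ^ l := by
  have hnat : Summable fun l : ℕ => ((l : ℝ) + 1) ^ ⌈q⌉₊ * r ^ l := by
    have hgeom : Summable fun l : ℕ => (l : ℝ) ^ ⌈q⌉₊ * r ^ l :=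
      summable_pow_mul_geometric_of_norm_lt_one ⌈q⌉₊ (by rwa [Real.norm_of_nonneg hr0.le])
    have := ((summable_nat_add_iff 1).2 hgeom).mul_left r⁻¹
    refine this.congr fun l => ?_
    push_cast
    field_simp
    ring
  refine hnat.of_nonneg_of_le (fun l => by positivity) fun l => ?_
  gcongr
  calc ((l : ℝ) + 1) ^ q ≤ ((l : ℝ) + 1) ^ (⌈q⌉₊ : ℝ) :=
        Real.rpow_le_rpow_of_exponent_le (by linarith [l.cast_nonneg (α := ℝ)]) (Nat.le_ceil q)
    _ = ((l : ℝ) + 1) ^ ⌈q⌉₊ := Real.rpow_natCast _ _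

lemma condA_of_forall_le {β : ℕ → ℕ → ℝ} {α θ : ℝ} {u : ℕ → ℝ} (hu : Summable u)
    (h : ∀ J l : ℕ, (2 : ℝ) ^ (2 * (J : ℝ) * α) * tTail β θ J (J + l) ≤ u l) :
    CondA β α θ := by
  refine ⟨∑' l, u l, fun J => ?_⟩
  have hshift : ∑' j, (if J ≤ j then tTail β θ J j else 0) = ∑' l, tTail β θ J (J + l) := by
    rw [← (add_right_injective J).tsum_eq]
    · simp
    · intro j hj
      have hJj : J ≤ j := by
        by_contra hJj
        exact hj (if_neg hJj)
      exact ⟨j - J, Nat.add_sub_cancel' hJj⟩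
  rw [hshift, ← tsum_mul_left]
  refine Summable.tsum_le_tsum (h J) (hu.of_nonneg_of_le (fun l => ?_) (h J)) hu
  exact mul_nonneg (by positivity) tTail_nonneg

lemma condA_of_levelNorm_le {β : ℕ → ℕ → ℝ} {α θ p C : ℝ} (hp : 0 < p) (hp2 : p ≤ 2)
    (hθ : 0 ≤ θ) (hσ : 0 < α + 1 / 2 - 1 / p)
    (hC : ∀ j : ℕ, levelNorm β p j ≤ C * 2 ^ (-(j * (α + 1 / 2 - 1 / p)))) :
    CondA β α θ := by
  set σ := α + 1 / 2 - 1 / p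
  have hr : (2 : ℝ) ^ (-(2 * σ)) < 1 :=
    Real.rpow_lt_one_of_one_lt_of_neg one_lt_two (by linarith)
  refine condA_of_forall_le
    ((summable_add_one_rpow_mul_geometric (θ * (2 / p - 1)) (by positivity) hr).mul_left (C ^ 2))
    fun J l => ?_
  have hnorm : 0 ≤ levelNorm β p (J + l) := by unfold levelNorm; positivity
  have htail := tTail_le_levelNorm_sq_mul (β := β) hp hp2 hθ (Nat.le_add_right J l)
  rw [show (((J + l : ℕ) : ℝ) - J + 1) = l + 1 by push_cast; ring] at htail
  calc (2 : ℝ) ^ (2 * (J : ℝ) * α) * tTail β θ J (J + l)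
      ≤ 2 ^ (2 * (J : ℝ) * α) *
          ((C * 2 ^ (-(((J + l : ℕ) : ℝ) * σ))) ^ 2 *
            (2 ^ J * ((l : ℝ) + 1) ^ (-θ)) ^ (1 - 2 / p)) := by
        gcongr
        refine htail.trans ?_
        gcongr
        exact hC _
    _ = C ^ 2 * (((l : ℝ) + 1) ^ (θ * (2 / p - 1)) * ((2 : ℝ) ^ (-(2 * σ))) ^ l) := by
        have h2 : (2 : ℝ) ^ (2 * (J : ℝ) * α) * (2 ^ (-(((J + l : ℕ) : ℝ) * σ))) ^ 2 *
            ((2 : ℝ) ^ J) ^ (1 - 2 / p) = ((2 : ℝ) ^ (-(2 * σ))) ^ l := by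
          simp only [← Real.rpow_natCast, ← Real.rpow_mul zero_le_two, ← Real.rpow_add two_pos]
          congr 1
          push_cast
          ring
        have hL : (((l : ℝ) + 1) ^ (-θ)) ^ (1 - 2 / p) = ((l : ℝ) + 1) ^ (θ * (2 / p - 1)) := by
          rw [← Real.rpow_mul (by positivity)]
          ring_nf
        rw [mul_pow, Real.mul_rpow (by positivity) (by positivity), hL, ← h2]
        ring

theorem stmt_8_general (α θ p : ℝ) (hα : 0 < α) (hθ : 2 < θ)
    (hp2 : 2 / (1 + 2 * α) < p)
    (β : ℕ → ℕ → ℝ) (hbesov : CondBesov β α p) :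
    CondA β α θ := by
  have hp : 0 < p := lt_trans (by positivity) hp2
  have hσ : 0 < α + 1 / 2 - 1 / p := by
    rw [div_lt_iff₀ (by positivity)] at hp2
    rw [sub_pos, div_lt_iff₀ hp]
    linarith
  obtain ⟨C, hC⟩ := hbesov.exists_levelNorm_le hp
  rcases le_total p 2 with hple | hple
  · exact condA_of_levelNorm_le hp hple (by linarith) hσ hC
  · refine condA_of_levelNorm_le (C := C) two_pos le_rfl (by linarith) (by linarith) fun j => ?_
    calc levelNorm β 2 j ≤ 2 ^ ((j : ℝ) * (1 / 2 - 1 / p)) * levelNorm β p j :=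
          levelNorm_two_le hple j
      _ ≤ 2 ^ ((j : ℝ) * (1 / 2 - 1 / p)) * (C * 2 ^ (-(j * (α + 1 / 2 - 1 / p)))) := by
          gcongr
          exact hC j
      _ = C * 2 ^ (-(j * (α + 1 / 2 - 1 / 2))) := by
          rw [mul_left_comm, ← Real.rpow_add two_pos]
          ring_nf

/-- the inclusion `B^α_{p,∞} ⊆ A^α_θ` for `p ≥ 1`, `p > 2/(1+2α)`. -/
theorem stmt_8 (α θ p : ℝ) (hα : 0 < α) (hθ : 2 < θ) (hp1 : 1 ≤ p)
    (hp2 : 2 / (1 + 2 * α) < p)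
    (β : ℕ → ℕ → ℝ) (hβ : SqSummable β) (hbesov : CondBesov β α p) :
    CondA β α θ :=
  stmt_8_general α θ p hα hθ hp2 β hbesov
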